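/- Let (A, Con, Δ) be a normal default structure with trivial entailment such that every information state has a unique extension. Then the derived skeptical nonmonotonic consequence relation |~_A satisfies cautious monotony: for every finite consistent X and tokens a, b, if X |~_A {a} and X |~_A {b}, then X ∪ {a} |~_A {b}. -/

import Mathlib

/-! Rule premises are finite, so every premise inside `Φ(x, S)` already lies in some finite stage
`φ(x, S, j)`; hence `Φ` is cumulative: `x ⊆ x' ⊆ Φ(x, S)` gives `Φ(x', S) = Φ(x, S)`. If `y` is
the extension of `X` and `a ∈ y`, then `y` is also an extension of `X ∪ {a}`, and uniqueness makes
it the only one, so it contains `b`. -/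

/-- A set is consistent if every finite subset of it lies in Con. -/
def IsCons {α : Type*} (Con : Set α → Prop) (S : Set α) : Prop :=
  ∀ X : Set α, X ⊆ S → X.Finite → Con X

/-- With trivial entailment: φ(x, S, 0) = x and
φ(x, S, i+1) = φ(x, S, i) ∪ {a | (X, a) ∈ Δ, X ⊆ φ(x, S, i), {a} ∪ S consistent}. -/
def phiT {α : Type*} (Con : Set α → Prop) (Δ : Set (Set α × α)) (x S : Set α) :
    ℕ → Set α
  | 0 => x
  | i + 1 =>
      phiT Con Δ x S i ∪
        {a | ∃ X : Set α, (X, a) ∈ Δ ∧ X ⊆ phiT Con Δ x S i ∧ IsCons Con ({a} ∪ S)}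

/-- Φ(x, S) = ⋃_{i≥0} φ(x, S, i). -/
def PhiT {α : Type*} (Con : Set α → Prop) (Δ : Set (Set α × α)) (x S : Set α) : Set α :=
  ⋃ i, phiT Con Δ x S i

/-- A consistent set y is an extension of x (x ε y) if Φ(x, y) = y. -/
def ExtT {α : Type*} (Con : Set α → Prop) (Δ : Set (Set α × α)) (x y : Set α) : Prop :=
  IsCons Con y ∧ PhiT Con Δ x y = y

/-- Skeptical nonmonotonic consequence: X |~ a iff a belongs to every extension of X. -/
def Nmc {α : Type*} (Con : Set α → Prop) (Δ : Set (Set α × α)) (X : Set α) (a : α) : Prop :=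
  ∀ y : Set α, ExtT Con Δ X y → a ∈ y

/-- X |~ Y iff X |~ b for every b ∈ Y. -/
def NmcS {α : Type*} (Con : Set α → Prop) (Δ : Set (Set α × α)) (X Y : Set α) : Prop :=
  ∀ b ∈ Y, Nmc Con Δ X b

section

variable {α : Type*} {Con : Set α → Prop} {Δ : Set (Set α × α)}

theorem IsCons.mono {S T : Set α} (hT : IsCons Con T) (h : S ⊆ T) : IsCons Con S :=
  fun Z hZ hZf => hT Z (hZ.trans h) hZf

theorem phiT_monotone (x S : Set α) : Monotone (phiT Con Δ x S) :=
  monotone_nat_of_le_succ fun _ _ hc => Or.inl hc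

theorem phiT_mono_left {x x' : Set α} (S : Set α) (h : x ⊆ x') :
    ∀ i, phiT Con Δ x S i ⊆ phiT Con Δ x' S i
  | 0 => h
  | i + 1 => by
    rintro c (hc | ⟨Z, hZΔ, hZ, hcons⟩)
    · exact Or.inl (phiT_mono_left S h i hc)
    · exact Or.inr ⟨Z, hZΔ, hZ.trans (phiT_mono_left S h i), hcons⟩

theorem PhiT_mono_left {x x' : Set α} (S : Set α) (h : x ⊆ x') :
    PhiT Con Δ x S ⊆ PhiT Con Δ x' S :=
  Set.iUnion_mono (phiT_mono_left S h)

theorem subset_PhiT (x S : Set α) : x ⊆ PhiT Con Δ x S :=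
  Set.subset_iUnion (phiT Con Δ x S) 0

theorem exists_subset_phiT_of_finite {x S Z : Set α} (hZf : Z.Finite)
    (hZ : Z ⊆ PhiT Con Δ x S) : ∃ j, Z ⊆ phiT Con Δ x S j := by
  induction Z, hZf using Set.Finite.induction_on with
  | empty => exact ⟨0, Set.empty_subset _⟩
  | @insert c Z _ _ ih =>
    obtain ⟨j, hj⟩ := ih ((Set.subset_insert c Z).trans hZ)
    obtain ⟨k, hk⟩ := Set.mem_iUnion.1 (hZ (Set.mem_insert c Z))
    exact ⟨max j k, Set.insert_subset (phiT_monotone x S (le_max_right j k) hk)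
      (hj.trans (phiT_monotone x S (le_max_left j k)))⟩

theorem PhiT_subset_of_subset_PhiT (hfin : ∀ p ∈ Δ, p.1.Finite) {x x' S : Set α}
    (h : x' ⊆ PhiT Con Δ x S) : PhiT Con Δ x' S ⊆ PhiT Con Δ x S := by
  refine Set.iUnion_subset fun i => ?_
  induction i with
  | zero => exact h
  | succ i ih =>
    rintro c (hc | ⟨Z, hZΔ, hZ, hcons⟩)
    · exact ih hc
    · obtain ⟨j, hj⟩ := exists_subset_phiT_of_finite (hfin _ hZΔ) (hZ.trans ih)
      exact Set.mem_iUnion.2 ⟨j + 1, Or.inr ⟨Z, hZΔ, hj, hcons⟩⟩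

theorem PhiT_eq_of_subset_of_subset_PhiT (hfin : ∀ p ∈ Δ, p.1.Finite) {x x' S : Set α}
    (h₁ : x ⊆ x') (h₂ : x' ⊆ PhiT Con Δ x S) : PhiT Con Δ x' S = PhiT Con Δ x S :=
  (PhiT_subset_of_subset_PhiT hfin h₂).antisymm (PhiT_mono_left S h₁)

theorem ExtT.subset {x y : Set α} (hy : ExtT Con Δ x y) : x ⊆ y :=
  hy.2 ▸ subset_PhiT x y

theorem ExtT.of_subset_of_subset (hfin : ∀ p ∈ Δ, p.1.Finite) {x x' y : Set α}
    (hy : ExtT Con Δ x y) (h₁ : x ⊆ x') (h₂ : x' ⊆ y) : ExtT Con Δ x' y :=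
  ⟨hy.1, by rw [PhiT_eq_of_subset_of_subset_PhiT hfin h₁ (hy.2.symm ▸ h₂), hy.2]⟩

end

theorem unique_extension_cautious_monotony_general {α : Type*} (Con : Set α → Prop)
    (Δ : Set (Set α × α))
    -- Con is a collection of finite subsets of A with ∅ ∈ Con, closed under
    -- subsets, containing every singleton
    (hCfin : ∀ X : Set α, Con X → X.Finite)
    -- Δ is a set of normal default rules, each a pair (X, a) with X ∈ Con
    (hDelta : ∀ p ∈ Δ, Con p.1)
    -- every information state has a unique extension
    (huniq : ∀ x : Set α, IsCons Con x → ∃! y : Set α, ExtT Con Δ x y) :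
    ∀ (X : Set α) (a b : α), Con X →
      Nmc Con Δ X a → Nmc Con Δ X b → Nmc Con Δ (X ∪ {a}) b := by
  intro X a b _ ha hb z hz
  have hfin : ∀ p ∈ Δ, p.1.Finite := fun p hp => hCfin _ (hDelta p hp)
  have hXa_cons : IsCons Con (X ∪ {a}) := hz.1.mono hz.subset
  obtain ⟨y, hy, -⟩ := huniq X (hXa_cons.mono Set.subset_union_left)
  have hyXa : ExtT Con Δ (X ∪ {a}) y := hy.of_subset_of_subset hfin Set.subset_union_left
    (Set.union_subset hy.subset (Set.singleton_subset_iff.2 (ha y hy)))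
  obtain ⟨w, -, hw⟩ := huniq (X ∪ {a}) hXa_cons
  rw [hw z hz, ← hw y hyXa]
  exact hb y hy

/-- if every information state has a unique extension, then |~_A satisfies
cautious monotony: X |~ {a} and X |~ {b} imply X ∪ {a} |~ {b}. -/
theorem unique_extension_cautious_monotony {α : Type*} (Con : Set α → Prop)
    (Δ : Set (Set α × α))
    -- Con is a collection of finite subsets of A with ∅ ∈ Con, closed under
    -- subsets, containing every singleton
    (hCfin : ∀ X : Set α, Con X → X.Finite)
    (hCempty : Con ∅)
    (hCsub : ∀ X Y : Set α, X ⊆ Y → Con Y → Con X)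
    (hCsing : ∀ a : α, Con {a})
    -- Δ is a set of normal default rules, each a pair (X, a) with X ∈ Con
    (hDelta : ∀ p ∈ Δ, Con p.1)
    -- every information state has a unique extension
    (huniq : ∀ x : Set α, IsCons Con x → ∃! y : Set α, ExtT Con Δ x y) :
    ∀ (X : Set α) (a b : α), Con X →
      Nmc Con Δ X a → Nmc Con Δ X b → Nmc Con Δ (X ∪ {a}) b :=
  unique_extension_cautious_monotony_general Con Δ hCfin hDelta huniq
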